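/- arXiv:2605.20773 — 7 statements merged into one kernel-verified Lean document; each statement's English description precedes it below -/
import Mathlib

section
/- Let G(x) = (1/2)e^{-|x|} and for q ∈ ℝ let E_q(x) = e^{-|x-q|}. Then for every q ∈ ℝ and every x ∈ ℝ, the convolution (G * E_q²)(x) = (1/3)(-E_q(x)² + 2E_q(x)). -/
open MeasureTheory Real Set

lemma integrableOn_exp_three_Iic : IntegrableOn (fun y : ℝ => Real.exp (3 * y)) (Iic 0) := by
  have hm : AEStronglyMeasurable (fun y : ℝ => Real.exp (3 * y)) (volume.restrict (Iic 0)) :=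
    (Real.continuous_exp.comp (continuous_const.mul continuous_id)).aestronglyMeasurable
  refine Integrable.mono (integrableOn_exp_Iic 0) hm ?_
  refine (ae_restrict_iff' measurableSet_Iic).2 (Filter.Eventually.of_forall fun y hy => ?_)
  simp only [Real.norm_eq_abs, abs_of_pos (Real.exp_pos _)]
  exact Real.exp_le_exp.2 (by simp only [mem_Iic] at hy; linarith)

lemma integral_exp_three_Iic : (∫ y : ℝ in Iic 0, Real.exp (3 * y)) = 1 / 3 := by
  have h := integral_comp_neg_Iic (0 : ℝ) (fun y => Real.exp (-(3 * y)))
  simp only [mul_neg, neg_neg, neg_zero] at h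
  rw [h]
  have h2 := integral_comp_mul_left_Ioi (fun u => Real.exp (-u)) 0 (by norm_num : (0:ℝ) < 3)
  simp only [mul_zero, integral_exp_neg_Ioi, neg_zero, Real.exp_zero, smul_eq_mul, mul_one] at h2
  rw [h2]; norm_num

lemma integral_exp_neg_three_Ioi (a : ℝ) :
    (∫ y : ℝ in Ioi a, Real.exp (-(3 * y))) = Real.exp (-(3 * a)) / 3 := by
  have h2 := integral_comp_mul_left_Ioi (fun u => Real.exp (-u)) a (by norm_num : (0:ℝ) < 3)
  simp only [integral_exp_neg_Ioi, smul_eq_mul] at h2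
  rw [h2]; ring

lemma key (a : ℝ) (ha : 0 ≤ a) :
    (∫ y : ℝ, (1/2) * Real.exp (-|a - y|) * (Real.exp (-|y|))^2)
      = (1/3) * (-(Real.exp (-a))^2 + 2 * Real.exp (-a)) := by
  set f : ℝ → ℝ := fun y => (1/2) * Real.exp (-|a - y|) * (Real.exp (-|y|))^2 with hf
  have hcont : Continuous f := by fun_prop
  have e1 : EqOn f (fun y => Real.exp (-a) / 2 * Real.exp (3 * y)) (Iic 0) := by
    intro y hy
    simp only [mem_Iic] at hy
    simp only [hf, abs_of_nonneg (by linarith : (0:ℝ) ≤ a - y), abs_of_nonpos hy, neg_neg]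
    rw [sq, ← Real.exp_add, mul_assoc]
    have h : Real.exp (-(a - y)) * Real.exp (y + y) = Real.exp (-a) * Real.exp (3 * y) := by
      rw [← Real.exp_add, ← Real.exp_add]; congr 1; ring
    rw [h]; ring
  have e2 : EqOn f (fun y => Real.exp (-a) / 2 * Real.exp (-y)) (Ioc 0 a) := by
    intro y hy
    simp only [mem_Ioc] at hy
    simp only [hf, abs_of_nonneg (by linarith [hy.2] : (0:ℝ) ≤ a - y),
      abs_of_nonneg (le_of_lt hy.1)]
    rw [sq, ← Real.exp_add, mul_assoc]
    have h : Real.exp (-(a - y)) * Real.exp (-y + -y) = Real.exp (-a) * Real.exp (-y) := by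
      rw [← Real.exp_add, ← Real.exp_add]; congr 1; ring
    rw [h]; ring
  have e3 : EqOn f (fun y => Real.exp a / 2 * Real.exp (-(3 * y))) (Ioi a) := by
    intro y hy
    simp only [mem_Ioi] at hy
    simp only [hf, abs_of_nonpos (by linarith : a - y ≤ (0:ℝ)),
      abs_of_nonneg (by linarith : (0:ℝ) ≤ y)]
    rw [sq, ← Real.exp_add, mul_assoc]
    have h : Real.exp (- -(a - y)) * Real.exp (-y + -y) = Real.exp a * Real.exp (-(3 * y)) := by
      rw [← Real.exp_add, ← Real.exp_add]; congr 1; ring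
    rw [h]; ring
  have i1 : IntegrableOn f (Iic 0) :=
    IntegrableOn.congr_fun (integrableOn_exp_three_Iic.const_mul (Real.exp (-a) / 2))
      e1.symm measurableSet_Iic
  have i2 : IntegrableOn f (Ioc 0 a) := hcont.integrableOn_Ioc
  have i3 : IntegrableOn f (Ioi a) := by
    have h3 : IntegrableOn (fun y : ℝ => Real.exp (-(3 * y))) (Ioi a) := by
      have := exp_neg_integrableOn_Ioi a (by norm_num : (0:ℝ) < 3)
      simpa [neg_mul] using this
    exact IntegrableOn.congr_fun (h3.const_mul (Real.exp a / 2)) e3.symm measurableSet_Ioi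
  have i23 : IntegrableOn f (Ioi 0) := by
    rw [← Ioc_union_Ioi_eq_Ioi ha]
    exact i2.union i3
  have v1 : (∫ y in Iic 0, f y) = Real.exp (-a) / 6 := by
    rw [setIntegral_congr_fun measurableSet_Iic e1, integral_const_mul, integral_exp_three_Iic]
    ring
  have v2 : (∫ y in Ioc 0 a, f y) = (1/2) * (Real.exp (-a) - Real.exp (-a) ^ 2) := by
    rw [setIntegral_congr_fun measurableSet_Ioc e2, integral_const_mul,
      ← intervalIntegral.integral_of_le ha]
    have hI : (∫ y in (0:ℝ)..a, Real.exp (-y)) = 1 - Real.exp (-a) := by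
      rw [intervalIntegral.integral_comp_neg (fun y => Real.exp y), integral_exp]; simp
    rw [hI]; ring
  have v3 : (∫ y in Ioi a, f y) = Real.exp (-a) ^ 2 / 6 := by
    rw [setIntegral_congr_fun measurableSet_Ioi e3, integral_const_mul,
      integral_exp_neg_three_Ioi]
    have h : Real.exp a * Real.exp (-(3 * a)) = Real.exp (-a) ^ 2 := by
      rw [← Real.exp_add, sq, ← Real.exp_add]; congr 1; ring
    rw [div_mul_div_comm, h]; norm_num
  have split2 : (∫ y in Ioi 0, f y) = (∫ y in Ioc 0 a, f y) + ∫ y in Ioi a, f y := by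
    rw [← setIntegral_union (Ioc_disjoint_Ioi le_rfl) measurableSet_Ioi i2 i3,
      Ioc_union_Ioi_eq_Ioi ha]
  have split1 : (∫ y : ℝ, f y) = (∫ y in Iic 0, f y) + ∫ y in Ioi 0, f y :=
    (intervalIntegral.integral_Iic_add_Ioi i1 i23).symm
  rw [show (∫ y : ℝ, (1/2) * Real.exp (-|a - y|) * (Real.exp (-|y|))^2) = ∫ y : ℝ, f y from rfl]
  rw [split1, split2, v1, v2, v3]
  ring

open MeasureTheory Real

/-- Convolution of the Helmholtz kernel `G(x) = (1/2)e^{-|x|}` with `E_q² = e^{-2|·-q|}`: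
`(G * E_q²)(x) = (1/3)(-E_q(x)² + 2 E_q(x))`. -/
theorem helmholtz_conv_peakon_sq (q x : ℝ) :
    (∫ y : ℝ, (1/2) * Real.exp (-|x - y|) * (Real.exp (-|y - q|))^2)
      = (1/3) * (-(Real.exp (-|x - q|))^2 + 2 * Real.exp (-|x - q|)) := by
  have htrans := integral_add_right_eq_self (μ := volume)
    (fun y : ℝ => (1/2) * Real.exp (-|x - y|) * (Real.exp (-|y - q|))^2) q
  have hre : (∫ y : ℝ, (1/2) * Real.exp (-|x - y|) * (Real.exp (-|y - q|))^2)
      = ∫ y : ℝ, (1/2) * Real.exp (-|(x - q) - y|) * (Real.exp (-|y|))^2 := by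
    rw [← htrans]
    congr 1
    ext y
    rw [show x - (y + q) = (x - q) - y by ring, show y + q - q = y by ring]
  rw [hre]
  rcases le_or_gt 0 (x - q) with h | h
  · rw [key (x - q) h, abs_of_nonneg h]
  · have hneg : (∫ y : ℝ, (1/2) * Real.exp (-|(x - q) - y|) * (Real.exp (-|y|))^2)
        = ∫ y : ℝ, (1/2) * Real.exp (-|(q - x) - y|) * (Real.exp (-|y|))^2 := by
      rw [← integral_neg_eq_self (μ := volume)
        (fun y : ℝ => (1/2) * Real.exp (-|(q - x) - y|) * (Real.exp (-|y|))^2)]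
      congr 1
      ext y
      rw [abs_neg, show (q - x) - (-y) = -((x - q) - y) by ring, abs_neg]
    rw [hneg, key (q - x) (by linarith), abs_of_neg h]
    simp [neg_sub, neg_neg]
end

section
/- Let G(x) = (1/2)e^{-|x|}, E_i(x) = e^{-|x-q_i|}, E_j(x) = e^{-|x-q_j|}, E_{ij} = e^{-|q_i-q_j|}, σ_i(x) = sgn(x-q_i), σ_j(x) = sgn(x-q_j), σ_{ij} = sgn(q_i-q_j), with q_i ≠ q_j real numbers. Then for all x ∉ {q_i, q_j}: (G * (E_i E_j))(x) = (1/3)(-E_i(x)E_j(x) + E_{ij}E_i(x) + E_{ij}E_j(x)) + (2σ_{ij}/3)(σ_j(x)E_i(x)E_j(x) - σ_i(x)E_i(x)E_j(x) + E_{ij}σ_i(x)E_i(x) - E_{ij}σ_j(x)E_j(x)). -/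
open MeasureTheory Real Set

lemma intExpIoi (c k m : ℝ) (hk : 0 < k) :
    ∫ y in Ioi c, Real.exp (-(k*y) + m) = Real.exp (-(k*c) + m) / k := by
  have h1 : ∀ y : ℝ, Real.exp (-(k*y)+m) = Real.exp m * Real.exp (-(k*y)) := by
    intro y; rw [← Real.exp_add]; ring_nf
  simp_rw [h1]
  rw [integral_const_mul]
  have h2 : (∫ y in Ioi c, Real.exp (-(k*y))) = k⁻¹ • ∫ y in Ioi (k*c), Real.exp (-y) :=
    integral_comp_mul_left_Ioi (fun t => Real.exp (-t)) c hk
  rw [h2, integral_exp_neg_Ioi, smul_eq_mul]; ring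

lemma intExpIic (c k m : ℝ) (hk : 0 < k) :
    ∫ y in Iic c, Real.exp (k*y + m) = Real.exp (k*c + m) / k := by
  have h := integral_comp_neg_Ioi (c := -c) (f := fun y => Real.exp (k*y + m))
  simp only [neg_neg] at h
  rw [← h]
  simp only [mul_neg]
  rw [intExpIoi (-c) k m hk, mul_neg, neg_neg]

lemma intExpIoc (a b k m : ℝ) (hab : a ≤ b) (hk : k ≠ 0) :
    ∫ y in Ioc a b, Real.exp (k*y + m) = (Real.exp (k*b + m) - Real.exp (k*a + m)) / k := by
  rw [← intervalIntegral.integral_of_le hab,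
    intervalIntegral.integral_comp_mul_add (f := Real.exp) hk m, integral_exp, smul_eq_mul]
  ring

lemma collapse (A B C D : ℝ) (h : A + B + C = D) :
    (1/2 : ℝ) * Real.exp A * (Real.exp B * Real.exp C) = (1/2) * Real.exp D := by
  subst h; rw [Real.exp_add, Real.exp_add]; ring

lemma integrableOn_exp3_Iic (c m : ℝ) :
    IntegrableOn (fun y : ℝ => Real.exp (3*y + m)) (Iic c) := by
  refine Integrable.mono' ((integrableOn_exp_Iic c).const_mul (Real.exp (2*c + m))) ?_ ?_
  · exact (Real.continuous_exp.comp (by continuity)).aestronglyMeasurable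
  · filter_upwards [ae_restrict_mem measurableSet_Iic] with y hy
    rw [norm_of_nonneg (Real.exp_pos _).le, ← Real.exp_add]
    exact Real.exp_le_exp.mpr (by simp only [mem_Iic] at hy; linarith)

lemma integrableOn_exp3_Ioi (c m : ℝ) :
    IntegrableOn (fun y : ℝ => Real.exp (-(3*y) + m)) (Ioi c) := by
  have h := (exp_neg_integrableOn_Ioi c (by norm_num : (0:ℝ) < 3)).const_mul (Real.exp m)
  refine IntegrableOn.congr_fun h (fun y hy => ?_) measurableSet_Ioi
  rw [← Real.exp_add]; ring_nf

lemma splitInt (f : ℝ → ℝ) (p1 p2 p3 : ℝ) (h1 : p1 ≤ p2) (h2 : p2 ≤ p3)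
    (i1 : IntegrableOn f (Iic p1)) (i2 : IntegrableOn f (Ioc p1 p2))
    (i3 : IntegrableOn f (Ioc p2 p3)) (i4 : IntegrableOn f (Ioi p3)) :
    ∫ y, f y = (∫ y in Iic p1, f y) + (∫ y in Ioc p1 p2, f y)
      + (∫ y in Ioc p2 p3, f y) + (∫ y in Ioi p3, f y) := by
  have hI2 : IntegrableOn f (Iic p2) := by
    rw [← Iic_union_Ioc_eq_Iic h1]; exact i1.union i2
  have hI3 : IntegrableOn f (Iic p3) := by
    rw [← Iic_union_Ioc_eq_Iic h2]; exact hI2.union i3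
  have e3 : (∫ y in Iic p3, f y) = (∫ y in Iic p2, f y) + ∫ y in Ioc p2 p3, f y := by
    rw [← setIntegral_union (Iic_disjoint_Ioc le_rfl) measurableSet_Ioc hI2 i3,
      Iic_union_Ioc_eq_Iic h2]
  have e2 : (∫ y in Iic p2, f y) = (∫ y in Iic p1, f y) + ∫ y in Ioc p1 p2, f y := by
    rw [← setIntegral_union (Iic_disjoint_Ioc le_rfl) measurableSet_Ioc i1 i2,
      Iic_union_Ioc_eq_Iic h1]
  rw [← intervalIntegral.integral_Iic_add_Ioi hI3 i4, e3, e2]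

lemma contF (x a b : ℝ) :
    Continuous (fun y : ℝ =>
      (1/2) * Real.exp (-|x - y|) * (Real.exp (-|y - a|) * Real.exp (-|y - b|))) := by
  apply Continuous.mul
  · exact continuous_const.mul
      (Real.continuous_exp.comp (continuous_const.sub continuous_id).abs.neg)
  · exact (Real.continuous_exp.comp (continuous_id.sub continuous_const).abs.neg).mul
      (Real.continuous_exp.comp (continuous_id.sub continuous_const).abs.neg)

lemma regionMid (a b x : ℝ) (hax : a ≤ x) (hxb : x ≤ b) :
    (∫ y : ℝ, (1/2) * Real.exp (-|x - y|) * (Real.exp (-|y - a|) * Real.exp (-|y - b|)))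
      = Real.exp (a-b) - Real.exp (2*a-b-x)/3 - Real.exp (a+x-2*b)/3 := by
  set f := fun y : ℝ => (1/2) * Real.exp (-|x - y|) * (Real.exp (-|y - a|) * Real.exp (-|y - b|))
    with hf
  have e1 : Set.EqOn f (fun y => (1/2) * Real.exp (3*y + (-x-a-b))) (Iic a) := by
    intro y hy
    simp only [mem_Iic] at hy
    simp only [hf]
    rw [abs_of_nonneg (by linarith : (0:ℝ) ≤ x - y), abs_of_nonpos (by linarith : y - a ≤ 0),
      abs_of_nonpos (by linarith : y - b ≤ 0)]
    exact collapse _ _ _ _ (by ring)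
  have e4 : Set.EqOn f (fun y => (1/2) * Real.exp (-(3*y) + (x+a+b))) (Ioi b) := by
    intro y hy
    simp only [mem_Ioi] at hy
    simp only [hf]
    rw [abs_of_nonpos (by linarith : x - y ≤ 0), abs_of_nonneg (by linarith : (0:ℝ) ≤ y - a),
      abs_of_nonneg (by linarith : (0:ℝ) ≤ y - b)]
    exact collapse _ _ _ _ (by ring)
  have e2 : Set.EqOn f (fun y => (1/2) * Real.exp (1*y + (a-b-x))) (Ioc a x) := by
    intro y hy
    obtain ⟨h1, h2⟩ := hy
    simp only [hf]
    rw [abs_of_nonneg (by linarith : (0:ℝ) ≤ x - y), abs_of_nonneg (by linarith : (0:ℝ) ≤ y - a),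
      abs_of_nonpos (by linarith : y - b ≤ 0)]
    exact collapse _ _ _ _ (by ring)
  have e3 : Set.EqOn f (fun y => (1/2) * Real.exp ((-1)*y + (x+a-b))) (Ioc x b) := by
    intro y hy
    obtain ⟨h1, h2⟩ := hy
    simp only [hf]
    rw [abs_of_nonpos (by linarith : x - y ≤ 0), abs_of_nonneg (by linarith : (0:ℝ) ≤ y - a),
      abs_of_nonpos (by linarith : y - b ≤ 0)]
    exact collapse _ _ _ _ (by ring)
  have i1 : IntegrableOn f (Iic a) :=
    IntegrableOn.congr_fun ((integrableOn_exp3_Iic a (-x-a-b)).const_mul (1/2) : _)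
      e1.symm measurableSet_Iic
  have i4 : IntegrableOn f (Ioi b) :=
    IntegrableOn.congr_fun ((integrableOn_exp3_Ioi b (x+a+b)).const_mul (1/2) : _)
      e4.symm measurableSet_Ioi
  have i2 : IntegrableOn f (Ioc a x) := (contF x a b).integrableOn_Ioc
  have i3 : IntegrableOn f (Ioc x b) := (contF x a b).integrableOn_Ioc
  rw [splitInt f a x b hax hxb i1 i2 i3 i4]
  rw [setIntegral_congr_fun measurableSet_Iic e1, setIntegral_congr_fun measurableSet_Ioc e2,
    setIntegral_congr_fun measurableSet_Ioc e3, setIntegral_congr_fun measurableSet_Ioi e4]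
  rw [integral_const_mul, integral_const_mul, integral_const_mul, integral_const_mul,
    intExpIic a 3 _ (by norm_num), intExpIoc a x 1 _ hax (by norm_num),
    intExpIoc x b (-1) _ hxb (by norm_num), intExpIoi b 3 _ (by norm_num)]
  rw [show (3:ℝ)*a + (-x-a-b) = 2*a-b-x by ring, show (1:ℝ)*x + (a-b-x) = a-b by ring,
    show (1:ℝ)*a + (a-b-x) = 2*a-b-x by ring, show (-1:ℝ)*b + (x+a-b) = a+x-2*b by ring,
    show (-1:ℝ)*x + (x+a-b) = a-b by ring, show -(3*b) + (x+a+b) = a+x-2*b by ring]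
  ring

lemma regionLeft (a b x : ℝ) (hxa : x ≤ a) (hab : a ≤ b) :
    (∫ y : ℝ, (1/2) * Real.exp (-|x - y|) * (Real.exp (-|y - a|) * Real.exp (-|y - b|)))
      = Real.exp (x-b) - Real.exp (2*x-a-b)/3 - Real.exp (x+a-2*b)/3 := by
  set f := fun y : ℝ => (1/2) * Real.exp (-|x - y|) * (Real.exp (-|y - a|) * Real.exp (-|y - b|))
    with hf
  have e1 : Set.EqOn f (fun y => (1/2) * Real.exp (3*y + (-x-a-b))) (Iic x) := by
    intro y hy
    simp only [mem_Iic] at hy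
    simp only [hf]
    rw [abs_of_nonneg (by linarith : (0:ℝ) ≤ x - y), abs_of_nonpos (by linarith : y - a ≤ 0),
      abs_of_nonpos (by linarith : y - b ≤ 0)]
    exact collapse _ _ _ _ (by ring)
  have e4 : Set.EqOn f (fun y => (1/2) * Real.exp (-(3*y) + (x+a+b))) (Ioi b) := by
    intro y hy
    simp only [mem_Ioi] at hy
    simp only [hf]
    rw [abs_of_nonpos (by linarith : x - y ≤ 0), abs_of_nonneg (by linarith : (0:ℝ) ≤ y - a),
      abs_of_nonneg (by linarith : (0:ℝ) ≤ y - b)]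
    exact collapse _ _ _ _ (by ring)
  have e2 : Set.EqOn f (fun y => (1/2) * Real.exp (1*y + (x-a-b))) (Ioc x a) := by
    intro y hy
    obtain ⟨h1, h2⟩ := hy
    simp only [hf]
    rw [abs_of_nonpos (by linarith : x - y ≤ 0), abs_of_nonpos (by linarith : y - a ≤ 0),
      abs_of_nonpos (by linarith : y - b ≤ 0)]
    exact collapse _ _ _ _ (by ring)
  have e3 : Set.EqOn f (fun y => (1/2) * Real.exp ((-1)*y + (x+a-b))) (Ioc a b) := by
    intro y hy
    obtain ⟨h1, h2⟩ := hy
    simp only [hf]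
    rw [abs_of_nonpos (by linarith : x - y ≤ 0), abs_of_nonneg (by linarith : (0:ℝ) ≤ y - a),
      abs_of_nonpos (by linarith : y - b ≤ 0)]
    exact collapse _ _ _ _ (by ring)
  have i1 : IntegrableOn f (Iic x) :=
    IntegrableOn.congr_fun ((integrableOn_exp3_Iic x (-x-a-b)).const_mul (1/2) : _)
      e1.symm measurableSet_Iic
  have i4 : IntegrableOn f (Ioi b) :=
    IntegrableOn.congr_fun ((integrableOn_exp3_Ioi b (x+a+b)).const_mul (1/2) : _)
      e4.symm measurableSet_Ioi
  have i2 : IntegrableOn f (Ioc x a) := (contF x a b).integrableOn_Ioc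
  have i3 : IntegrableOn f (Ioc a b) := (contF x a b).integrableOn_Ioc
  rw [splitInt f x a b hxa hab i1 i2 i3 i4]
  rw [setIntegral_congr_fun measurableSet_Iic e1, setIntegral_congr_fun measurableSet_Ioc e2,
    setIntegral_congr_fun measurableSet_Ioc e3, setIntegral_congr_fun measurableSet_Ioi e4]
  rw [integral_const_mul, integral_const_mul, integral_const_mul, integral_const_mul,
    intExpIic x 3 _ (by norm_num), intExpIoc x a 1 _ hxa (by norm_num),
    intExpIoc a b (-1) _ hab (by norm_num), intExpIoi b 3 _ (by norm_num)]
  rw [show (3:ℝ)*x + (-x-a-b) = 2*x-a-b by ring, show (1:ℝ)*a + (x-a-b) = x-b by ring,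
    show (1:ℝ)*x + (x-a-b) = 2*x-a-b by ring, show (-1:ℝ)*b + (x+a-b) = x+a-2*b by ring,
    show (-1:ℝ)*a + (x+a-b) = x-b by ring, show -(3*b) + (x+a+b) = x+a-2*b by ring]
  ring

lemma regionRight (a b x : ℝ) (hab : a ≤ b) (hbx : b ≤ x) :
    (∫ y : ℝ, (1/2) * Real.exp (-|x - y|) * (Real.exp (-|y - a|) * Real.exp (-|y - b|)))
      = Real.exp (a-x) - Real.exp (2*a-b-x)/3 - Real.exp (a+b-2*x)/3 := by
  set f := fun y : ℝ => (1/2) * Real.exp (-|x - y|) * (Real.exp (-|y - a|) * Real.exp (-|y - b|))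
    with hf
  have e1 : Set.EqOn f (fun y => (1/2) * Real.exp (3*y + (-x-a-b))) (Iic a) := by
    intro y hy
    simp only [mem_Iic] at hy
    simp only [hf]
    rw [abs_of_nonneg (by linarith : (0:ℝ) ≤ x - y), abs_of_nonpos (by linarith : y - a ≤ 0),
      abs_of_nonpos (by linarith : y - b ≤ 0)]
    exact collapse _ _ _ _ (by ring)
  have e4 : Set.EqOn f (fun y => (1/2) * Real.exp (-(3*y) + (x+a+b))) (Ioi x) := by
    intro y hy
    simp only [mem_Ioi] at hy
    simp only [hf]
    rw [abs_of_nonpos (by linarith : x - y ≤ 0), abs_of_nonneg (by linarith : (0:ℝ) ≤ y - a),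
      abs_of_nonneg (by linarith : (0:ℝ) ≤ y - b)]
    exact collapse _ _ _ _ (by ring)
  have e2 : Set.EqOn f (fun y => (1/2) * Real.exp (1*y + (a-b-x))) (Ioc a b) := by
    intro y hy
    obtain ⟨h1, h2⟩ := hy
    simp only [hf]
    rw [abs_of_nonneg (by linarith : (0:ℝ) ≤ x - y), abs_of_nonneg (by linarith : (0:ℝ) ≤ y - a),
      abs_of_nonpos (by linarith : y - b ≤ 0)]
    exact collapse _ _ _ _ (by ring)
  have e3 : Set.EqOn f (fun y => (1/2) * Real.exp ((-1)*y + (a+b-x))) (Ioc b x) := by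
    intro y hy
    obtain ⟨h1, h2⟩ := hy
    simp only [hf]
    rw [abs_of_nonneg (by linarith : (0:ℝ) ≤ x - y), abs_of_nonneg (by linarith : (0:ℝ) ≤ y - a),
      abs_of_nonneg (by linarith : (0:ℝ) ≤ y - b)]
    exact collapse _ _ _ _ (by ring)
  have i1 : IntegrableOn f (Iic a) :=
    IntegrableOn.congr_fun ((integrableOn_exp3_Iic a (-x-a-b)).const_mul (1/2) : _)
      e1.symm measurableSet_Iic
  have i4 : IntegrableOn f (Ioi x) :=
    IntegrableOn.congr_fun ((integrableOn_exp3_Ioi x (x+a+b)).const_mul (1/2) : _)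
      e4.symm measurableSet_Ioi
  have i2 : IntegrableOn f (Ioc a b) := (contF x a b).integrableOn_Ioc
  have i3 : IntegrableOn f (Ioc b x) := (contF x a b).integrableOn_Ioc
  rw [splitInt f a b x hab hbx i1 i2 i3 i4]
  rw [setIntegral_congr_fun measurableSet_Iic e1, setIntegral_congr_fun measurableSet_Ioc e2,
    setIntegral_congr_fun measurableSet_Ioc e3, setIntegral_congr_fun measurableSet_Ioi e4]
  rw [integral_const_mul, integral_const_mul, integral_const_mul, integral_const_mul,
    intExpIic a 3 _ (by norm_num), intExpIoc a b 1 _ hab (by norm_num),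
    intExpIoc b x (-1) _ hbx (by norm_num), intExpIoi x 3 _ (by norm_num)]
  rw [show (3:ℝ)*a + (-x-a-b) = 2*a-b-x by ring, show (1:ℝ)*b + (a-b-x) = a-x by ring,
    show (1:ℝ)*a + (a-b-x) = 2*a-b-x by ring, show (-1:ℝ)*x + (a+b-x) = a+b-2*x by ring,
    show (-1:ℝ)*b + (a+b-x) = a-x by ring, show -(3*x) + (x+a+b) = a+b-2*x by ring]
  ring

/-- Convolution of the Helmholtz kernel with `E_i E_j` for distinct peaks `q_i ≠ q_j`. -/
theorem helmholtz_conv_EiEj (qi qj : ℝ) (hq : qi ≠ qj) (x : ℝ) (hxi : x ≠ qi) (hxj : x ≠ qj) :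
    (∫ y : ℝ, (1/2) * Real.exp (-|x - y|) * (Real.exp (-|y - qi|) * Real.exp (-|y - qj|)))
      = (1/3) * (-(Real.exp (-|x - qi|) * Real.exp (-|x - qj|))
          + Real.exp (-|qi - qj|) * Real.exp (-|x - qi|)
          + Real.exp (-|qi - qj|) * Real.exp (-|x - qj|))
        + (2 * Real.sign (qi - qj) / 3) *
          (Real.sign (x - qj) * Real.exp (-|x - qi|) * Real.exp (-|x - qj|)
            - Real.sign (x - qi) * Real.exp (-|x - qi|) * Real.exp (-|x - qj|)
            + Real.exp (-|qi - qj|) * Real.sign (x - qi) * Real.exp (-|x - qi|)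
            - Real.exp (-|qi - qj|) * Real.sign (x - qj) * Real.exp (-|x - qj|)) := by
  have hswap : (∫ y : ℝ, (1/2) * Real.exp (-|x - y|)
        * (Real.exp (-|y - qi|) * Real.exp (-|y - qj|)))
      = ∫ y : ℝ, (1/2) * Real.exp (-|x - y|) * (Real.exp (-|y - qj|) * Real.exp (-|y - qi|)) := by
    congr 1; funext y; ring
  rcases lt_or_gt_of_ne hq with hij | hij
  · rcases lt_trichotomy x qi with h1 | h1 | h1
    · rw [regionLeft qi qj x h1.le hij.le,
        abs_of_neg (by linarith : x - qi < 0), abs_of_neg (by linarith : x - qj < 0),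
        abs_of_neg (by linarith : qi - qj < 0),
        Real.sign_of_neg (by linarith : x - qi < 0), Real.sign_of_neg (by linarith : x - qj < 0),
        Real.sign_of_neg (by linarith : qi - qj < 0)]
      ring_nf
      simp only [neg_neg, ← Real.exp_add]
      ring_nf
    · exact absurd h1 hxi
    · rcases lt_trichotomy x qj with h2 | h2 | h2
      · rw [regionMid qi qj x h1.le h2.le,
          abs_of_pos (by linarith : 0 < x - qi), abs_of_neg (by linarith : x - qj < 0),
          abs_of_neg (by linarith : qi - qj < 0),
          Real.sign_of_pos (by linarith : 0 < x - qi), Real.sign_of_neg (by linarith : x - qj < 0),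
          Real.sign_of_neg (by linarith : qi - qj < 0)]
        ring_nf
        simp only [neg_neg, ← Real.exp_add]
        ring_nf
      · exact absurd h2 hxj
      · rw [regionRight qi qj x hij.le h2.le,
          abs_of_pos (by linarith : 0 < x - qi), abs_of_pos (by linarith : 0 < x - qj),
          abs_of_neg (by linarith : qi - qj < 0),
          Real.sign_of_pos (by linarith : 0 < x - qi), Real.sign_of_pos (by linarith : 0 < x - qj),
          Real.sign_of_neg (by linarith : qi - qj < 0)]
        ring_nf
        simp only [neg_neg, ← Real.exp_add]
        ring_nf
  · rw [hswap]
    rcases lt_trichotomy x qj with h1 | h1 | h1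
    · rw [regionLeft qj qi x h1.le hij.le,
        abs_of_neg (by linarith : x - qi < 0), abs_of_neg (by linarith : x - qj < 0),
        abs_of_pos (by linarith : 0 < qi - qj),
        Real.sign_of_neg (by linarith : x - qi < 0), Real.sign_of_neg (by linarith : x - qj < 0),
        Real.sign_of_pos (by linarith : 0 < qi - qj)]
      ring_nf
      simp only [neg_neg, ← Real.exp_add]
      ring_nf
    · exact absurd h1 hxj
    · rcases lt_trichotomy x qi with h2 | h2 | h2
      · rw [regionMid qj qi x h1.le h2.le,
          abs_of_neg (by linarith : x - qi < 0), abs_of_pos (by linarith : 0 < x - qj),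
          abs_of_pos (by linarith : 0 < qi - qj),
          Real.sign_of_neg (by linarith : x - qi < 0), Real.sign_of_pos (by linarith : 0 < x - qj),
          Real.sign_of_pos (by linarith : 0 < qi - qj)]
        ring_nf
        simp only [neg_neg, ← Real.exp_add]
        ring_nf
      · exact absurd h2 hxi
      · rw [regionRight qj qi x hij.le h2.le,
          abs_of_pos (by linarith : 0 < x - qi), abs_of_pos (by linarith : 0 < x - qj),
          abs_of_pos (by linarith : 0 < qi - qj),
          Real.sign_of_pos (by linarith : 0 < x - qi), Real.sign_of_pos (by linarith : 0 < x - qj),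
          Real.sign_of_pos (by linarith : 0 < qi - qj)]
        ring_nf
        simp only [neg_neg, ← Real.exp_add]
        ring_nf
end

section
/- Let G(x) = (1/2)e^{-|x|}, and with the notation E_i, E_j, E_{ij}, σ_i, σ_j, σ_{ij} as above for distinct q_i, q_j ∈ ℝ. Then for all x ∉ {q_i, q_j}: (G * (σ_i σ_j E_i E_j))(x) = (1/3)(-E_i(x)E_j(x) + E_{ij}E_i(x) + E_{ij}E_j(x)) - (σ_{ij}/3)(σ_j(x)E_i(x)E_j(x) - σ_i(x)E_i(x)E_j(x) + E_{ij}σ_i(x)E_i(x) - E_{ij}σ_j(x)E_j(x)). -/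
/-!
With `h = E_x E_i E_j`, the kernel times the integrand is `σ_i σ_j h / 2`, and
`σ_i σ_j = 1 - 2 · 1_{(q_i, q_j)}` almost everywhere, so the convolution equals
`(1/2) ∫ h - ∫_{q_i}^{q_j} h`. Between consecutive points of `{x, q_i, q_j}` the function `h` is
an exponential with `h' = c h`, the slope `c` being `3, 1, -1, -3` from left to right; hence each
piece integrates to a difference of nodal values of `h` divided by `c`, and the nodal values are
exactly the products `E_i(x) E_j(x)`, `E_{ij} E_i(x)`, `E_{ij} E_j(x)` of the formula.
-/

open MeasureTheory Real Set Filter Topology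

section LinearODE

variable {h : ℝ → ℝ} {a b c : ℝ}

theorem intervalIntegral_eq_of_hasDerivAt_mul_self (hab : a ≤ b) (hc : c ≠ 0)
    (hcont : ContinuousOn h (Icc a b)) (hderiv : ∀ y ∈ Ioo a b, HasDerivAt h (c * h y) y) :
    ∫ y in a..b, h y = (h b - h a) / c := by
  have := intervalIntegral.integral_eq_sub_of_hasDerivAt_of_le hab hcont hderiv
    ((hcont.intervalIntegrable_of_Icc hab).const_mul c)
  rw [intervalIntegral.integral_const_mul] at this
  rw [← this, mul_div_cancel_left₀ _ hc]

theorem integral_Ioi_eq_of_hasDerivAt_mul_self (hc : c ≠ 0)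
    (hcont : ContinuousWithinAt h (Ici a) a) (hderiv : ∀ y ∈ Ioi a, HasDerivAt h (c * h y) y)
    (hint : IntegrableOn h (Ioi a)) :
    ∫ y in Ioi a, h y = -h a / c := by
  have hint' := hint.const_mul c
  have := integral_Ioi_of_hasDerivAt_of_tendsto hcont hderiv hint'
    (tendsto_zero_of_hasDerivAt_of_integrableOn_Ioi hderiv hint' hint)
  rw [integral_const_mul, zero_sub] at this
  rw [← this, mul_div_cancel_left₀ _ hc]

theorem integral_Iic_eq_of_hasDerivAt_mul_self (hc : c ≠ 0)
    (hcont : ContinuousWithinAt h (Iic a) a) (hderiv : ∀ y ∈ Iio a, HasDerivAt h (c * h y) y)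
    (hint : IntegrableOn h (Iic a)) :
    ∫ y in Iic a, h y = h a / c := by
  have hint' : IntegrableOn (fun y => c * h y) (Iic a) := hint.const_mul c
  have hlim : Tendsto h atBot (𝓝 0) :=
    tendsto_zero_of_hasDerivAt_of_integrableOn_Iic (a := a - 1)
      (fun y hy => hderiv y (by simp only [mem_Iio, mem_Iic] at hy ⊢; linarith))
      (hint'.mono_set (Iic_subset_Iic.2 (by linarith)))
      (hint.mono_set (Iic_subset_Iic.2 (by linarith)))
  have := integral_Iic_of_hasDerivAt_of_tendsto hcont hderiv hint' hlim
  rw [integral_const_mul, sub_zero] at this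
  rw [← this, mul_div_cancel_left₀ _ hc]

end LinearODE

theorem integral_sign_sub_mul_sign_sub_mul {f : ℝ → ℝ} (hf : Integrable f) {s t : ℝ}
    (hst : s ≤ t) :
    ∫ y, sign (y - s) * sign (y - t) * f y = (∫ y, f y) - 2 * ∫ y in s..t, f y := by
  have hae : (fun y => sign (y - s) * sign (y - t) * f y)
      =ᵐ[volume] fun y => f y - 2 * (Ioo s t).indicator f y := by
    filter_upwards [Measure.ae_ne volume s, Measure.ae_ne volume t] with y hs ht
    rcases hs.lt_or_gt with hys | hys
    · rw [sign_of_neg (by linarith), sign_of_neg (by linarith),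
        indicator_of_notMem (fun hy => hys.not_gt hy.1)]
      ring
    rcases ht.lt_or_gt with hyt | hyt
    · rw [sign_of_pos (by linarith), sign_of_neg (by linarith),
        indicator_of_mem (show y ∈ Ioo s t from ⟨hys, hyt⟩)]
      ring
    · rw [sign_of_pos (by linarith), sign_of_pos (by linarith),
        indicator_of_notMem (fun hy => hyt.not_gt hy.2)]
      ring
  rw [integral_congr_ae hae, integral_sub hf ((hf.indicator measurableSet_Ioo).const_mul 2),
    integral_const_mul, integral_indicator measurableSet_Ioo, intervalIntegral.integral_of_le hst,
    integral_Ioc_eq_integral_Ioo]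

theorem integrable_exp_neg_abs : Integrable fun y : ℝ => exp (-|y|) := by
  rw [← integrableOn_univ, ← Iic_union_Ioi (a := 0), integrableOn_union]
  exact ⟨(integrableOn_exp_Iic 0).congr_fun (fun y hy => by simp [abs_of_nonpos (mem_Iic.1 hy)])
      measurableSet_Iic,
    (integrableOn_exp_neg_Ioi 0).congr_fun (fun y hy => by simp [abs_of_pos (mem_Ioi.1 hy)])
      measurableSet_Ioi⟩

theorem hasDerivAt_exp_neg_abs_sub_of_lt {p y : ℝ} (hy : y < p) :
    HasDerivAt (fun y => exp (-|y - p|)) (1 * exp (-|y - p|)) y := by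
  simpa using ((hasDerivAt_abs_neg (sub_neg.2 hy)).comp y ((hasDerivAt_id y).sub_const p)).neg.exp

theorem hasDerivAt_exp_neg_abs_sub_of_gt {p y : ℝ} (hy : p < y) :
    HasDerivAt (fun y => exp (-|y - p|)) (-1 * exp (-|y - p|)) y := by
  simpa using ((hasDerivAt_abs_pos (sub_pos.2 hy)).comp y ((hasDerivAt_id y).sub_const p)).neg.exp

noncomputable def peakon3 (a b c y : ℝ) : ℝ := exp (-|y - a|) * exp (-|y - b|) * exp (-|y - c|)

section Peakon3

variable {a b c p q r y : ℝ}

theorem peakon3_comm_left (a b c : ℝ) : peakon3 a b c = peakon3 b a c := by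
  ext y; simp only [peakon3]; ring

theorem peakon3_comm_right (a b c : ℝ) : peakon3 a b c = peakon3 a c b := by
  ext y; simp only [peakon3]; ring

theorem continuous_peakon3 : Continuous (peakon3 a b c) := by
  unfold peakon3; fun_prop

theorem integrable_peakon3 : Integrable (peakon3 a b c) := by
  refine (integrable_exp_neg_abs.comp_sub_right a).mono' continuous_peakon3.aestronglyMeasurable
    (Eventually.of_forall fun y => ?_)
  have hle : ∀ z, exp (-|y - z|) ≤ 1 := fun z => exp_le_one_iff.2 (neg_nonpos.2 (abs_nonneg _))
  rw [norm_eq_abs, abs_of_pos (by unfold peakon3; positivity)]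
  calc peakon3 a b c y ≤ exp (-|y - a|) * 1 * 1 := by unfold peakon3; gcongr <;> exact hle _
    _ = exp (-|y - a|) := by ring

theorem hasDerivAt_peakon3_of_slopes {εa εb εc : ℝ}
    (ha : HasDerivAt (fun y => exp (-|y - a|)) (εa * exp (-|y - a|)) y)
    (hb : HasDerivAt (fun y => exp (-|y - b|)) (εb * exp (-|y - b|)) y)
    (hc : HasDerivAt (fun y => exp (-|y - c|)) (εc * exp (-|y - c|)) y) :
    HasDerivAt (peakon3 a b c) ((εa + εb + εc) * peakon3 a b c y) y :=
  ((ha.mul hb).mul hc).congr_deriv (by simp only [peakon3, Pi.mul_apply]; ring)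

theorem hasDerivAt_peakon3_of_lt (hy : y < p) (hpq : p ≤ q) (hqr : q ≤ r) :
    HasDerivAt (peakon3 p q r) (3 * peakon3 p q r y) y :=
  (hasDerivAt_peakon3_of_slopes (hasDerivAt_exp_neg_abs_sub_of_lt hy)
    (hasDerivAt_exp_neg_abs_sub_of_lt (hy.trans_le hpq))
    (hasDerivAt_exp_neg_abs_sub_of_lt (hy.trans_le (hpq.trans hqr)))).congr_deriv (by norm_num)

theorem hasDerivAt_peakon3_of_mem_Ioo_left (hpy : p < y) (hyq : y < q) (hqr : q ≤ r) :
    HasDerivAt (peakon3 p q r) (1 * peakon3 p q r y) y :=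
  (hasDerivAt_peakon3_of_slopes (hasDerivAt_exp_neg_abs_sub_of_gt hpy)
    (hasDerivAt_exp_neg_abs_sub_of_lt hyq)
    (hasDerivAt_exp_neg_abs_sub_of_lt (hyq.trans_le hqr))).congr_deriv (by norm_num)

theorem hasDerivAt_peakon3_of_mem_Ioo_right (hpq : p ≤ q) (hqy : q < y) (hyr : y < r) :
    HasDerivAt (peakon3 p q r) (-1 * peakon3 p q r y) y :=
  (hasDerivAt_peakon3_of_slopes (hasDerivAt_exp_neg_abs_sub_of_gt (hpq.trans_lt hqy))
    (hasDerivAt_exp_neg_abs_sub_of_gt hqy)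
    (hasDerivAt_exp_neg_abs_sub_of_lt hyr)).congr_deriv (by norm_num)

theorem hasDerivAt_peakon3_of_gt (hpq : p ≤ q) (hqr : q ≤ r) (hy : r < y) :
    HasDerivAt (peakon3 p q r) (-3 * peakon3 p q r y) y :=
  (hasDerivAt_peakon3_of_slopes (hasDerivAt_exp_neg_abs_sub_of_gt ((hpq.trans hqr).trans_lt hy))
    (hasDerivAt_exp_neg_abs_sub_of_gt (hqr.trans_lt hy))
    (hasDerivAt_exp_neg_abs_sub_of_gt hy)).congr_deriv (by norm_num)

theorem integral_Iic_peakon3 (hpq : p ≤ q) (hqr : q ≤ r) :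
    ∫ y in Iic p, peakon3 p q r y = peakon3 p q r p / 3 :=
  integral_Iic_eq_of_hasDerivAt_mul_self three_ne_zero continuous_peakon3.continuousWithinAt
    (fun _ hy => hasDerivAt_peakon3_of_lt hy hpq hqr) integrable_peakon3.integrableOn

theorem intervalIntegral_peakon3_left (hpq : p ≤ q) (hqr : q ≤ r) :
    ∫ y in p..q, peakon3 p q r y = peakon3 p q r q - peakon3 p q r p := by
  rw [intervalIntegral_eq_of_hasDerivAt_mul_self hpq one_ne_zero continuous_peakon3.continuousOn
    (fun _ hy => hasDerivAt_peakon3_of_mem_Ioo_left hy.1 hy.2 hqr), div_one]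

theorem intervalIntegral_peakon3_right (hpq : p ≤ q) (hqr : q ≤ r) :
    ∫ y in q..r, peakon3 p q r y = peakon3 p q r q - peakon3 p q r r := by
  rw [intervalIntegral_eq_of_hasDerivAt_mul_self hqr (by norm_num) continuous_peakon3.continuousOn
    (fun _ hy => hasDerivAt_peakon3_of_mem_Ioo_right hpq hy.1 hy.2), div_neg, div_one, neg_sub]

theorem integral_Ioi_peakon3 (hpq : p ≤ q) (hqr : q ≤ r) :
    ∫ y in Ioi r, peakon3 p q r y = peakon3 p q r r / 3 := by
  rw [integral_Ioi_eq_of_hasDerivAt_mul_self (by norm_num) continuous_peakon3.continuousWithinAt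
    (fun _ hy => hasDerivAt_peakon3_of_gt hpq hqr hy) integrable_peakon3.integrableOn,
    neg_div_neg_eq]

theorem integral_peakon3 (hpq : p ≤ q) (hqr : q ≤ r) :
    ∫ y, peakon3 p q r y
      = 2 * peakon3 p q r q - 2 / 3 * (peakon3 p q r p + peakon3 p q r r) := by
  rw [← intervalIntegral.integral_Iic_add_Ioi integrable_peakon3.integrableOn
      integrable_peakon3.integrableOn,
    ← intervalIntegral.integral_interval_add_Ioi (b := q) integrable_peakon3.integrableOn
      integrable_peakon3.integrableOn,
    ← intervalIntegral.integral_interval_add_Ioi (b := r) integrable_peakon3.integrableOn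
      integrable_peakon3.integrableOn,
    integral_Iic_peakon3 hpq hqr, intervalIntegral_peakon3_left hpq hqr,
    intervalIntegral_peakon3_right hpq hqr, integral_Ioi_peakon3 hpq hqr]
  ring

end Peakon3

theorem integral_sign_mul_sign_mul_peakon3 {s t x : ℝ} (hst : s < t) (hxs : x ≠ s)
    (hxt : x ≠ t) :
    ∫ y, sign (y - s) * sign (y - t) * peakon3 x s t y
      = 2 / 3 * (-peakon3 x s t x + peakon3 x s t s + peakon3 x s t t)
        + 2 / 3 * (sign (x - t) * (peakon3 x s t x - peakon3 x s t t)
          + sign (x - s) * (peakon3 x s t s - peakon3 x s t x)) := by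
  rw [integral_sign_sub_mul_sign_sub_mul integrable_peakon3 hst.le]
  rcases hxs.lt_or_gt with hx | hx
  · rw [integral_peakon3 hx.le hst.le, intervalIntegral_peakon3_right hx.le hst.le,
      sign_of_neg (sub_neg.2 hx), sign_of_neg (sub_neg.2 (hx.trans hst))]
    ring
  rcases hxt.lt_or_gt with hx' | hx'
  · rw [peakon3_comm_left, integral_peakon3 hx.le hx'.le,
      ← intervalIntegral.integral_add_adjacent_intervals (b := x)
        (continuous_peakon3.intervalIntegrable _ _) (continuous_peakon3.intervalIntegrable _ _),
      intervalIntegral_peakon3_left hx.le hx'.le, intervalIntegral_peakon3_right hx.le hx'.le,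
      sign_of_pos (sub_pos.2 hx), sign_of_neg (sub_neg.2 hx')]
    ring
  · rw [peakon3_comm_left, peakon3_comm_right, integral_peakon3 hst.le hx'.le,
      intervalIntegral_peakon3_left hst.le hx'.le,
      sign_of_pos (sub_pos.2 hx), sign_of_pos (sub_pos.2 hx')]
    ring

/-- Convolution of the Helmholtz kernel with `σ_i σ_j E_i E_j` for distinct peaks `q_i ≠ q_j`. -/
theorem helmholtz_conv_sigma_EiEj (qi qj : ℝ) (hq : qi ≠ qj) (x : ℝ) (hxi : x ≠ qi)
    (hxj : x ≠ qj) :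
    (∫ y : ℝ, (1/2) * Real.exp (-|x - y|) *
        (Real.sign (y - qi) * Real.sign (y - qj) * Real.exp (-|y - qi|) * Real.exp (-|y - qj|)))
      = (1/3) * (-(Real.exp (-|x - qi|) * Real.exp (-|x - qj|))
          + Real.exp (-|qi - qj|) * Real.exp (-|x - qi|)
          + Real.exp (-|qi - qj|) * Real.exp (-|x - qj|))
        - (Real.sign (qi - qj) / 3) *
          (Real.sign (x - qj) * Real.exp (-|x - qi|) * Real.exp (-|x - qj|)
            - Real.sign (x - qi) * Real.exp (-|x - qi|) * Real.exp (-|x - qj|)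
            + Real.exp (-|qi - qj|) * Real.sign (x - qi) * Real.exp (-|x - qi|)
            - Real.exp (-|qi - qj|) * Real.sign (x - qj) * Real.exp (-|x - qj|)) := by
  wlog hlt : qi < qj generalizing qi qj
  · have := this qj qi hq.symm hxj hxi (lt_of_le_of_ne (not_lt.1 hlt) hq.symm)
    rw [abs_sub_comm qj qi, ← neg_sub qi qj, sign_neg] at this
    convert this using 1
    · congr 1; ext y; ring
    · ring
  have hF : (fun y => (1/2) * exp (-|x - y|) *
      (sign (y - qi) * sign (y - qj) * exp (-|y - qi|) * exp (-|y - qj|)))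
      = fun y => (1/2) * (sign (y - qi) * sign (y - qj) * peakon3 x qi qj y) := by
    ext y; rw [peakon3, abs_sub_comm x y]; ring
  rw [hF, integral_const_mul, integral_sign_mul_sign_mul_peakon3 hlt hxi hxj,
    sign_of_neg (sub_neg.2 hlt)]
  simp only [peakon3, sub_self, abs_zero, neg_zero, exp_zero, mul_one, one_mul]
  rw [abs_sub_comm qi x, abs_sub_comm qj x, abs_sub_comm qj qi]
  ring
end

section
/- Let C, K > 0 and let ỹ : [0,T) → ℝ be differentiable with ỹ'(t) ≤ -C ỹ(t)² + K for all t, and ỹ(0) = ỹ₀ < -√(K/C). Then ỹ(t) → -∞ before t reaches (1/(2√(CK))) · log((ỹ₀ - √(K/C))/(ỹ₀ + √(K/C))). -/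
open Real Set

/-- Riccati-type blow-up to `-∞`: if `ỹ' ≤ -C ỹ² + K` on `[0,T)` with `ỹ 0 < -√(K/C)`, then
`T ≤ (1/(2√(CK))) log((ỹ₀ - √(K/C))/(ỹ₀ + √(K/C)))`. -/
theorem riccati_blowup_above (C K T : ℝ) (hC : 0 < C) (hK : 0 < K)
    (y y' : ℝ → ℝ)
    (hderiv : ∀ t ∈ Set.Ico (0:ℝ) T, HasDerivAt y (y' t) t)
    (hineq : ∀ t ∈ Set.Ico (0:ℝ) T, y' t ≤ -C * (y t)^2 + K)
    (hy0 : y 0 < -Real.sqrt (K / C)) :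
    T ≤ 1 / (2 * Real.sqrt (C * K)) *
      Real.log ((y 0 - Real.sqrt (K / C)) / (y 0 + Real.sqrt (K / C))) := by
  set a := Real.sqrt (K / C) with ha_def
  have ha : 0 < a := Real.sqrt_pos.mpr (div_pos hK hC)
  have ha2 : a ^ 2 = K / C := Real.sq_sqrt (div_pos hK hC).le
  have hCaK : C * a ^ 2 = K := by rw [ha2]; field_simp
  have hCa : Real.sqrt (C * K) = C * a := by
    have h1 : (C * a) ^ 2 = C * K := by rw [mul_pow, ha2]; field_simp
    rw [← h1, Real.sqrt_sq (by positivity)]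
  set c : ℝ := 1 / (2 * (C * a)) with hc_def
  have hcpos : 0 < c := by positivity
  -- Claim A: y stays below -a on [0, T)
  have hyA : ∀ τ ∈ Ico (0:ℝ) T, y τ < -a := by
    intro τ hτ
    by_contra hcon
    push_neg at hcon
    have hsub : Icc (0:ℝ) τ ⊆ Ico 0 T := fun t ht => ⟨ht.1, lt_of_le_of_lt ht.2 hτ.2⟩
    have hcont : ContinuousOn y (Icc 0 τ) := fun t ht =>
      ((hderiv t (hsub ht)).continuousAt).continuousWithinAt
    set E := Icc (0:ℝ) τ ∩ y ⁻¹' Ici (-a) with hE_def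
    have hEne : E.Nonempty := ⟨τ, ⟨hτ.1, le_rfl⟩, hcon⟩
    have hEclosed : IsClosed E :=
      hcont.preimage_isClosed_of_isClosed isClosed_Icc isClosed_Ici
    have hbdd : BddBelow E := ⟨0, fun t ht => ht.1.1⟩
    set t₀ := sInf E with ht₀_def
    have ht₀E : t₀ ∈ E := hEclosed.csInf_mem hEne hbdd
    have ht₀0 : 0 ≤ t₀ := ht₀E.1.1
    have ht₀pos : 0 < t₀ := by
      rcases ht₀0.lt_or_eq with h | h
      · exact h
      · exfalso; have := ht₀E.2; rw [← h] at this; simp only [mem_preimage, mem_Ici] at this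
        linarith
    have hlt : ∀ s, 0 ≤ s → s < t₀ → y s < -a := by
      intro s hs0 hst
      by_contra h; push_neg at h
      exact absurd (csInf_le hbdd ⟨⟨hs0, hst.le.trans ht₀E.1.2⟩, h⟩) (not_le.mpr hst)
    have hsub2 : Icc (0:ℝ) t₀ ⊆ Icc 0 τ := Icc_subset_Icc le_rfl ht₀E.1.2
    have hanti : AntitoneOn y (Icc 0 t₀) := by
      apply antitoneOn_of_deriv_nonpos (convex_Icc _ _) (hcont.mono hsub2)
      · intro x hx
        rw [interior_Icc] at hx
        exact (hderiv x (hsub (hsub2 (Ioo_subset_Icc_self hx)))).differentiableAt.differentiableWithinAt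
      · intro x hx
        rw [interior_Icc] at hx
        have hmem := hsub (hsub2 (Ioo_subset_Icc_self hx))
        rw [(hderiv x hmem).deriv]
        have h1 := hineq x hmem
        have h2 : y x < -a := hlt x hx.1.le hx.2
        have h3 : 0 < (-(y x + a)) * (-(y x - a)) :=
          mul_pos (by linarith) (by linarith)
        nlinarith [mul_pos hC h3]
    have hle := hanti (left_mem_Icc.mpr ht₀pos.le) (right_mem_Icc.mpr ht₀pos.le) ht₀pos.le
    have := ht₀E.2
    simp only [mem_preimage, mem_Ici] at this
    linarith
  -- positivity of log difference whenever y t < -a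
  have hlogpos : ∀ t : ℝ, y t < -a → 0 < Real.log (y t - a) - Real.log (y t + a) := by
    intro t ht
    have h1 : Real.log (y t + a) < Real.log (y t - a) := by
      rw [← Real.log_neg_eq_log (y t + a), ← Real.log_neg_eq_log (y t - a)]
      exact Real.log_lt_log (by linarith) (by linarith)
    linarith
  -- the target constant M
  set M := 1 / (2 * Real.sqrt (C * K)) *
      Real.log ((y 0 - a) / (y 0 + a)) with hM_def
  have hMeq : M = c * (Real.log (y 0 - a) - Real.log (y 0 + a)) := by
    rw [hM_def, hCa, Real.log_div (by linarith : y 0 - a ≠ 0) (by linarith : y 0 + a ≠ 0)]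
  have hMpos : 0 < M := by
    rw [hMeq]; exact mul_pos hcpos (hlogpos 0 hy0)
  -- Claim B: τ ≤ M for all τ ∈ [0, T)
  have hmain : ∀ τ ∈ Ico (0:ℝ) T, τ ≤ M := by
    intro τ hτ
    set g : ℝ → ℝ := fun s => c * (Real.log (y s - a) - Real.log (y s + a)) + s with hg_def
    have hsub : Icc (0:ℝ) τ ⊆ Ico 0 T := fun t ht => ⟨ht.1, lt_of_le_of_lt ht.2 hτ.2⟩
    have hder : ∀ x ∈ Icc (0:ℝ) τ,
        HasDerivAt g (c * (y' x / (y x - a) - y' x / (y x + a)) + 1) x := by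
      intro x hx
      have hmem := hsub hx
      have hyx := hyA x hmem
      have hne1 : y x - a ≠ 0 := by intro h; nlinarith [h]
      have hne2 : y x + a ≠ 0 := by intro h; nlinarith [h]
      have h1 : HasDerivAt (fun s => Real.log (y s - a)) (y' x / (y x - a)) x :=
        ((hderiv x hmem).sub_const a).log hne1
      have h2 : HasDerivAt (fun s => Real.log (y s + a)) (y' x / (y x + a)) x :=
        ((hderiv x hmem).add_const a).log hne2
      exact ((h1.sub h2).const_mul c).add (hasDerivAt_id x)
    have hcont : ContinuousOn g (Icc 0 τ) := fun t ht =>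
      ((hder t ht).continuousAt).continuousWithinAt
    have hanti : AntitoneOn g (Icc 0 τ) := by
      apply antitoneOn_of_deriv_nonpos (convex_Icc _ _) hcont
      · intro x hx
        rw [interior_Icc] at hx
        exact (hder x (Ioo_subset_Icc_self hx)).differentiableAt.differentiableWithinAt
      · intro x hx
        rw [interior_Icc] at hx
        have hxI := Ioo_subset_Icc_self hx
        rw [(hder x hxI).deriv]
        have hmem := hsub hxI
        have hyx := hyA x hmem
        have h1 := hineq x hmem
        have hne1 : y x - a ≠ 0 := by intro h; nlinarith [h]
        have hne2 : y x + a ≠ 0 := by intro h; nlinarith [h]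
        have hD : 0 < (y x) ^ 2 - a ^ 2 := by nlinarith
        have heq : c * (y' x / (y x - a) - y' x / (y x + a))
            = y' x / (C * ((y x) ^ 2 - a ^ 2)) := by
          rw [hc_def]
          field_simp
          ring
        rw [heq]
        have hCD : 0 < C * ((y x) ^ 2 - a ^ 2) := mul_pos hC hD
        have hdiv : y' x / (C * ((y x) ^ 2 - a ^ 2)) ≤ -1 := by
          rw [div_le_iff₀ hCD]
          nlinarith
        linarith
    have h0τ : (0:ℝ) ∈ Icc (0:ℝ) τ := left_mem_Icc.mpr hτ.1
    have hττ : τ ∈ Icc (0:ℝ) τ := right_mem_Icc.mpr hτ.1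
    have hgle := hanti h0τ hττ hτ.1
    have hyτ := hyA τ hτ
    have hposτ := hlogpos τ hyτ
    have : c * (Real.log (y τ - a) - Real.log (y τ + a)) + τ
        ≤ c * (Real.log (y 0 - a) - Real.log (y 0 + a)) + 0 := by
      simpa [hg_def] using hgle
    have hcl : 0 < c * (Real.log (y τ - a) - Real.log (y τ + a)) :=
      mul_pos hcpos hposτ
    rw [hMeq]
    linarith
  -- conclude T ≤ M
  by_contra hTM
  push_neg at hTM
  have hT0 : 0 < T := lt_trans hMpos hTM
  have hτmem : (M + T) / 2 ∈ Ico (0:ℝ) T := ⟨by linarith, by linarith⟩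
  have := hmain _ hτmem
  linarith
end

section
/- For every natural number q ≥ 1, ∫_{2^q}^{2^{q+1}} cos(2^{-q}πξ)/√(1+ξ²) dξ ≤ 0. -/
open Real intervalIntegral

/-- For `q ≥ 1`, `∫_{2^q}^{2^{q+1}} cos(2^{-q}πξ)/√(1+ξ²) dξ ≤ 0`. -/
theorem dyadic_cos_integral_nonpos (q : ℕ) (hq : 1 ≤ q) :
    (∫ ξ in ((2:ℝ)^q)..((2:ℝ)^(q+1)),
      Real.cos (Real.pi * ξ / 2^q) / Real.sqrt (1 + ξ^2)) ≤ 0 := by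
  set a : ℝ := 2^q with ha
  have ha1 : (1:ℝ) ≤ a := one_le_pow₀ (by norm_num)
  have ha0 : (0:ℝ) < a := by linarith
  set f : ℝ → ℝ := fun ξ => Real.cos (Real.pi * ξ / a) / Real.sqrt (1 + ξ^2) with hf
  have hfc : Continuous f := by
    apply Continuous.div (by fun_prop) (by fun_prop)
    intro x
    exact (Real.sqrt_pos.mpr (by positivity)).ne'
  have h2a : (2:ℝ)^(q+1) = 2*a := by rw [ha, pow_succ]; ring
  rw [h2a]
  have hsplit : (∫ ξ in a..(2*a), f ξ) =
      (∫ ξ in a..(3*a/2), f ξ) + ∫ ξ in (3*a/2)..(2*a), f ξ := by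
    rw [integral_add_adjacent_intervals (hfc.intervalIntegrable _ _)
      (hfc.intervalIntegrable _ _)]
  have hrefl : (∫ ξ in (3*a/2)..(2*a), f ξ) = ∫ ξ in a..(3*a/2), f (3*a - ξ) := by
    have e1 : 3*a - 3*a/2 = 3*a/2 := by ring
    have e2 : 3*a - a = 2*a := by ring
    rw [integral_comp_sub_left f (3*a), e1, e2]
  have hint : IntervalIntegrable (fun ξ => f (3*a - ξ)) MeasureTheory.volume a (3*a/2) :=
    (hfc.comp (continuous_const.sub continuous_id)).intervalIntegrable _ _
  rw [hsplit, hrefl, ← integral_add (hfc.intervalIntegrable _ _) hint]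
  have key : ∀ x ∈ Set.Icc a (3*a/2), 0 ≤ -(f x + f (3*a - x)) := by
    intro x hx
    obtain ⟨hxa, hx32⟩ := hx
    rw [neg_nonneg]
    have hcos : Real.cos (Real.pi * (3*a - x) / a) = - Real.cos (Real.pi * x / a) := by
      have h : Real.pi * (3*a - x) / a = (Real.pi - Real.pi * x / a) + 2 * Real.pi := by
        field_simp
        ring
      rw [h, Real.cos_add_two_pi, Real.cos_pi_sub]
    have hcneg : Real.cos (Real.pi * x / a) ≤ 0 := by
      apply Real.cos_nonpos_of_pi_div_two_le_of_le
      · rw [div_le_div_iff₀ (by norm_num) ha0]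
        nlinarith [Real.pi_pos]
      · rw [div_le_iff₀ ha0]
        nlinarith [Real.pi_pos]
    have hs1 : (0:ℝ) < Real.sqrt (1 + x^2) := Real.sqrt_pos.mpr (by positivity)
    have hs2 : (0:ℝ) < Real.sqrt (1 + (3*a - x)^2) := Real.sqrt_pos.mpr (by positivity)
    have hsle : Real.sqrt (1 + x^2) ≤ Real.sqrt (1 + (3*a - x)^2) := by
      apply Real.sqrt_le_sqrt
      nlinarith
    show Real.cos (Real.pi * x / a) / Real.sqrt (1 + x^2)
        + Real.cos (Real.pi * (3*a - x) / a) / Real.sqrt (1 + (3*a - x)^2) ≤ 0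
    rw [hcos, div_add_div _ _ hs1.ne' hs2.ne']
    apply div_nonpos_of_nonpos_of_nonneg
    · nlinarith [mul_nonneg (neg_nonneg.mpr hcneg) (sub_nonneg.mpr hsle)]
    · positivity
  have h := intervalIntegral.integral_nonneg (μ := MeasureTheory.volume)
    (f := fun x => -(f x + f (3*a - x))) (a := a) (b := 3*a/2) (by linarith) key
  rw [intervalIntegral.integral_neg] at h
  linarith
end

section
/- Let m : ℝ → ℝ be continuous, integrable, and nonnegative with m not identically zero, and define u(x) = (1/2)e^{-x}∫_{-∞}^x e^ξ m(ξ)dξ + (1/2)e^x∫_x^∞ e^{-ξ} m(ξ)dξ and u_x(x) = -(1/2)e^{-x}∫_{-∞}^x e^ξ m(ξ)dξ + (1/2)e^x∫_x^∞ e^{-ξ} m(ξ)dξ. Then for any real constants a, b with b ≥ |a|, one has a·u_x(x) + b·u(x) ≥ 0 for all x ∈ ℝ. -/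
open MeasureTheory Real Set

/-- If `m ≥ 0` is continuous, integrable, not identically zero, `u = G * m` and `u_x` are
given by the explicit kernel formulas, and `b ≥ |a|`, then `a u_x + b u ≥ 0` everywhere. -/
theorem combination_nonneg_of_nonneg_momentum (m : ℝ → ℝ) (hc : Continuous m)
    (hi : MeasureTheory.Integrable m) (hm : ∀ x, 0 ≤ m x) (hne : ¬ ∀ x, m x = 0)
    (a b : ℝ) (hab : |a| ≤ b) :
    ∀ x : ℝ, 0 ≤
      a * (-(1/2) * Real.exp (-x) * (∫ ξ in Set.Iic x, Real.exp ξ * m ξ)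
            + (1/2) * Real.exp x * (∫ ξ in Set.Ici x, Real.exp (-ξ) * m ξ))
      + b * ((1/2) * Real.exp (-x) * (∫ ξ in Set.Iic x, Real.exp ξ * m ξ)
            + (1/2) * Real.exp x * (∫ ξ in Set.Ici x, Real.exp (-ξ) * m ξ)) := by
  intro x
  have hI1 : 0 ≤ ∫ ξ in Set.Iic x, Real.exp ξ * m ξ :=
    setIntegral_nonneg measurableSet_Iic fun ξ _ =>
      mul_nonneg (Real.exp_pos ξ).le (hm ξ)
  have hI2 : 0 ≤ ∫ ξ in Set.Ici x, Real.exp (-ξ) * m ξ :=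
    setIntegral_nonneg measurableSet_Ici fun ξ _ =>
      mul_nonneg (Real.exp_pos _).le (hm ξ)
  have hA : 0 ≤ (1/2) * Real.exp (-x) * (∫ ξ in Set.Iic x, Real.exp ξ * m ξ) :=
    mul_nonneg (by positivity) hI1
  have hB : 0 ≤ (1/2) * Real.exp x * (∫ ξ in Set.Ici x, Real.exp (-ξ) * m ξ) :=
    mul_nonneg (by positivity) hI2
  have h1 : 0 ≤ b - a := by have := abs_le.mp hab; linarith [this.2]
  have h2 : 0 ≤ b + a := by have := abs_le.mp hab; linarith [this.1]
  nlinarith [mul_nonneg h1 hA, mul_nonneg h2 hB]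
end

section
/- Let m : ℝ → ℝ be continuous and integrable, G(x) = (1/2)e^{-|x|}, and u = G * m. Then for every x ∈ ℝ: u(x) = (1/2)e^{-x}∫_{-∞}^x e^ξ m(ξ)dξ + (1/2)e^x∫_x^∞ e^{-ξ}m(ξ)dξ, u is differentiable, and u'(x) = -(1/2)e^{-x}∫_{-∞}^x e^ξ m(ξ)dξ + (1/2)e^x∫_x^∞ e^{-ξ}m(ξ)dξ; in particular |u'(x)| ≤ u(x) whenever m ≥ 0, and ‖u‖_{L^∞} ≤ (1/2)‖m‖_{L¹} and ‖u'‖_{L^∞} ≤ (1/2)‖m‖_{L¹} in general. -/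
open MeasureTheory Real Set

/-!
Splitting the kernel at `y = x` factors `e^{-|x-y|}` as `e^{-x} e^{y}` on `y ≤ x` and as
`e^{x} e^{-y}` on `y ≥ x`, so `u` is the sum of a lower part `½ e^{-x} ∫_{-∞}^x e^ξ m` and an
upper part `½ e^{x} ∫_x^∞ e^{-ξ} m`. By the fundamental theorem of calculus their derivatives
are `m x / 2 - lower` and `upper - m x / 2`; the `m x / 2` terms cancel in `u'`. The weights
recombine to `e^{-|x-ξ|} ≤ 1`, so each part is bounded by half the `L¹` mass of `m` on its
half-line, which bounds both `u = lower + upper` and `u' = upper - lower`. The upper part of `m`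
is the lower part of `ξ ↦ m (-ξ)` at `-x`, so only the lower part has to be analysed.
-/

theorem hasDerivAt_integral_Iic {E : Type*} [NormedAddCommGroup E] [NormedSpace ℝ E]
    [CompleteSpace E] {f : ℝ → E} (hf : Continuous f) (hint : ∀ y, IntegrableOn f (Iic y))
    (x : ℝ) : HasDerivAt (fun y => ∫ t in Iic y, f t) (f x) x := by
  have hsplit : (fun y => ∫ t in Iic y, f t) =
      fun y => (∫ t in Iic 0, f t) + ∫ t in (0 : ℝ)..y, f t := by
    funext y
    rw [← intervalIntegral.integral_Iic_sub_Iic (hint 0) (hint y), add_sub_cancel]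
  rw [hsplit]
  exact (intervalIntegral.integral_hasDerivAt_right (hf.intervalIntegrable 0 x)
    hf.stronglyMeasurable.stronglyMeasurableAtFilter hf.continuousAt).const_add _

namespace Helmholtz

noncomputable def lowerPart (m : ℝ → ℝ) (x : ℝ) : ℝ :=
  (1/2) * exp (-x) * ∫ ξ in Iic x, exp ξ * m ξ

noncomputable def upperPart (m : ℝ → ℝ) (x : ℝ) : ℝ :=
  (1/2) * exp x * ∫ ξ in Ici x, exp (-ξ) * m ξ

variable {m : ℝ → ℝ}

theorem integrableOn_exp_mul_Iic (hi : Integrable m) (x : ℝ) :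
    IntegrableOn (fun ξ => exp ξ * m ξ) (Iic x) :=
  hi.restrict.bdd_mul continuous_exp.aestronglyMeasurable <|
    (ae_restrict_iff' measurableSet_Iic).2 <| ae_of_all _ fun ξ hξ => by
      simpa only [norm_eq_abs, abs_exp] using exp_le_exp.2 hξ

theorem integrable_kernel_mul (hi : Integrable m) (x : ℝ) :
    Integrable (fun y => (1/2) * exp (-|x - y|) * m y) :=
  hi.bdd_mul (by fun_prop) <| ae_of_all _ fun y => by
    rw [norm_mul, norm_eq_abs, norm_eq_abs, abs_exp, abs_of_pos (by norm_num : (0:ℝ) < 1/2)]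
    exact mul_le_of_le_one_right (by norm_num) (exp_le_one_iff.2 (neg_nonpos.2 (abs_nonneg _)))

theorem upperPart_eq_lowerPart_comp_neg (x : ℝ) :
    upperPart m x = lowerPart (fun ξ => m (-ξ)) (-x) := by
  have h := integral_comp_neg_Iic (-x) (fun ξ => exp (-ξ) * m ξ)
  simp only [neg_neg] at h
  rw [upperPart, lowerPart, neg_neg, h, integral_Ici_eq_integral_Ioi]

theorem integral_kernel_mul_eq (hi : Integrable m) (x : ℝ) :
    ∫ y, (1/2) * exp (-|x - y|) * m y = lowerPart m x + upperPart m x := by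
  rw [← intervalIntegral.integral_Iic_add_Ioi (integrable_kernel_mul hi x).integrableOn
    (integrable_kernel_mul hi x).integrableOn, lowerPart, upperPart, integral_Ici_eq_integral_Ioi,
    ← integral_const_mul, ← integral_const_mul]
  congr 1
  · refine setIntegral_congr_fun measurableSet_Iic fun y hy => ?_
    rw [abs_of_nonneg (sub_nonneg.2 hy), show -(x - y) = -x + y by ring, exp_add]
    ring
  · refine setIntegral_congr_fun measurableSet_Ioi fun y hy => ?_
    rw [abs_of_neg (sub_neg.2 hy), show -(-(x - y)) = x + -y by ring, exp_add]
    ring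

theorem hasDerivAt_lowerPart (hc : Continuous m) (hi : Integrable m) (x : ℝ) :
    HasDerivAt (lowerPart m) (m x / 2 - lowerPart m x) x := by
  have hweight : HasDerivAt (fun x => (1/2) * exp (-x)) (-((1/2) * exp (-x))) x := by
    simpa using ((hasDerivAt_neg x).exp).const_mul (1/2 : ℝ)
  have hint := hasDerivAt_integral_Iic (f := fun ξ => exp ξ * m ξ) (by fun_prop)
    (integrableOn_exp_mul_Iic hi) x
  refine (hweight.mul hint).congr_deriv ?_
  rw [lowerPart, exp_neg]
  field_simp
  ring

theorem hasDerivAt_upperPart (hc : Continuous m) (hi : Integrable m) (x : ℝ) :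
    HasDerivAt (upperPart m) (upperPart m x - m x / 2) x := by
  have hreflect : upperPart m = fun x => lowerPart (fun ξ => m (-ξ)) (-x) :=
    funext upperPart_eq_lowerPart_comp_neg
  have h := (hasDerivAt_lowerPart (m := fun ξ => m (-ξ)) (by fun_prop) hi.comp_neg (-x)).comp x
    (hasDerivAt_neg x)
  rw [hreflect]
  refine h.congr_deriv ?_
  simp only [neg_neg]
  ring

theorem lowerPart_nonneg (hm : ∀ y, 0 ≤ m y) (x : ℝ) : 0 ≤ lowerPart m x :=
  mul_nonneg (by positivity) <|
    setIntegral_nonneg measurableSet_Iic fun ξ _ => mul_nonneg (exp_pos ξ).le (hm ξ)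

theorem upperPart_nonneg (hm : ∀ y, 0 ≤ m y) (x : ℝ) : 0 ≤ upperPart m x := by
  rw [upperPart_eq_lowerPart_comp_neg]
  exact lowerPart_nonneg (fun y => hm (-y)) (-x)

theorem abs_lowerPart_le (hi : Integrable m) (x : ℝ) :
    |lowerPart m x| ≤ (1/2) * ∫ ξ in Iic x, |m ξ| := by
  have hbound : ‖∫ ξ in Iic x, exp ξ * m ξ‖ ≤ ∫ ξ in Iic x, exp x * |m ξ| :=
    norm_integral_le_of_norm_le (hi.abs.integrableOn.const_mul _) <|
      (ae_restrict_iff' measurableSet_Iic).2 <| ae_of_all _ fun ξ hξ => by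
        rw [norm_mul, norm_eq_abs, norm_eq_abs, abs_exp]
        exact mul_le_mul_of_nonneg_right (exp_le_exp.2 hξ) (abs_nonneg _)
  calc |lowerPart m x| = (1/2) * exp (-x) * |∫ ξ in Iic x, exp ξ * m ξ| := by
        rw [lowerPart, abs_mul, abs_mul, abs_exp, abs_of_pos (by norm_num : (0:ℝ) < 1/2)]
    _ ≤ (1/2) * exp (-x) * ∫ ξ in Iic x, exp x * |m ξ| := by rw [← norm_eq_abs]; gcongr
    _ = (1/2) * ∫ ξ in Iic x, |m ξ| := by
        rw [integral_const_mul, mul_assoc, ← mul_assoc (exp (-x)), ← exp_add, neg_add_cancel,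
          exp_zero, one_mul]

theorem abs_upperPart_le (hi : Integrable m) (x : ℝ) :
    |upperPart m x| ≤ (1/2) * ∫ ξ in Ici x, |m ξ| := by
  have h := integral_comp_neg_Iic (-x) (fun ξ => |m ξ|)
  rw [neg_neg] at h
  rw [upperPart_eq_lowerPart_comp_neg, integral_Ici_eq_integral_Ioi, ← h]
  exact abs_lowerPart_le hi.comp_neg (-x)

theorem abs_lowerPart_add_abs_upperPart_le (hi : Integrable m) (x : ℝ) :
    |lowerPart m x| + |upperPart m x| ≤ (1/2) * ∫ y, |m y| :=
  calc |lowerPart m x| + |upperPart m x|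
      ≤ (1/2) * (∫ ξ in Iic x, |m ξ|) + (1/2) * ∫ ξ in Ici x, |m ξ| :=
        add_le_add (abs_lowerPart_le hi x) (abs_upperPart_le hi x)
    _ = (1/2) * ∫ y, |m y| := by
        rw [← mul_add, integral_Iic_eq_integral_Iio,
          intervalIntegral.integral_Iio_add_Ici hi.abs.integrableOn hi.abs.integrableOn]

end Helmholtz

open Helmholtz in
/-- For continuous integrable `m` and `u = G * m` with `G(x) = (1/2)e^{-|x|}`:
the explicit kernel formula for `u`, differentiability of `u` with the explicit formula for
`u'`, the bound `|u'| ≤ u` when `m ≥ 0`, and the bounds `‖u‖_∞, ‖u'‖_∞ ≤ (1/2)‖m‖_{L¹}`. -/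
theorem helmholtz_conv_properties (m : ℝ → ℝ) (hc : Continuous m)
    (hi : MeasureTheory.Integrable m) :
    let u : ℝ → ℝ := fun x => ∫ y : ℝ, (1/2) * Real.exp (-|x - y|) * m y
    let ux : ℝ → ℝ := fun x =>
      -(1/2) * Real.exp (-x) * (∫ ξ in Set.Iic x, Real.exp ξ * m ξ)
        + (1/2) * Real.exp x * (∫ ξ in Set.Ici x, Real.exp (-ξ) * m ξ)
    (∀ x : ℝ, u x = (1/2) * Real.exp (-x) * (∫ ξ in Set.Iic x, Real.exp ξ * m ξ)
        + (1/2) * Real.exp x * (∫ ξ in Set.Ici x, Real.exp (-ξ) * m ξ))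
    ∧ (∀ x : ℝ, HasDerivAt u (ux x) x)
    ∧ ((∀ y, 0 ≤ m y) → ∀ x : ℝ, |ux x| ≤ u x)
    ∧ (∀ x : ℝ, |u x| ≤ (1/2) * ∫ y : ℝ, |m y|)
    ∧ (∀ x : ℝ, |ux x| ≤ (1/2) * ∫ y : ℝ, |m y|) := by
  intro u ux
  have hu : u = fun x => lowerPart m x + upperPart m x := funext (integral_kernel_mul_eq hi)
  have hux : ∀ x, ux x = -lowerPart m x + upperPart m x := fun x => by
    simp only [ux, lowerPart, upperPart, neg_mul]
  refine ⟨fun x => congrFun hu x, fun x => ?_, fun hm x => ?_, fun x => ?_, fun x => ?_⟩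
  · rw [hu, hux]
    exact ((hasDerivAt_lowerPart hc hi x).add (hasDerivAt_upperPart hc hi x)).congr_deriv (by ring)
  · have := lowerPart_nonneg hm x
    have := upperPart_nonneg hm x
    rw [hu, hux, abs_le]
    constructor <;> linarith
  · rw [hu]
    exact (abs_add_le _ _).trans (abs_lowerPart_add_abs_upperPart_le hi x)
  · rw [hux]
    refine (abs_add_le _ _).trans ?_
    rw [abs_neg]
    exact abs_lowerPart_add_abs_upperPart_le hi x
end
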